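/- For all α ∈ (0,1], all u with Φ̄(u) ≤ α/2, and all v ≥ 0, the function g_α(u) := Φ̄⁻¹(Φ̄(u)/α) satisfies g_α(u + v) ≥ g_α(u) + v. -/

import Mathlib

open MeasureTheory Real Set

/-- Standard normal density. -/
noncomputable def phi (x : ℝ) : ℝ := (Real.sqrt (2 * Real.pi))⁻¹ * Real.exp (-x ^ 2 / 2)

/-- Upper tail of the standard normal distribution. -/
noncomputable def Phibar (x : ℝ) : ℝ := ∫ t in Set.Ioi x, phi t

/-- Inverse of the upper tail function `Φ̄ : ℝ → (0,1)`. -/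
noncomputable def PhibarInv : ℝ → ℝ := Function.invFun Phibar

/-- The function `h_α`. -/
noncomputable def halpha (α ℓ : ℝ) : ℝ := PhibarInv (α * Phibar ℓ) - ℓ

/-- The function `g_α(u) := Φ̄⁻¹(Φ̄(u)/α)`. -/
noncomputable def galpha (α u : ℝ) : ℝ := PhibarInv (Phibar u / α)

/-!
The upper tail `Φ̄` is log-concave: `(Φ̄ / φ)' = (x Φ̄ - φ) / φ ≤ 0` by Mills' inequality
`x Φ̄(x) ≤ φ(x)`, so the hazard rate `φ / Φ̄` increases and `Φ̄(x + v) / Φ̄(x)` decreases in `x`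
for `v ≥ 0`.
Put `w = g_α(u)`, so that `Φ̄(w) = Φ̄(u) / α ≥ Φ̄(u)` and hence `w ≤ u`. Then
`Φ̄(u + v) / α = Φ̄(w) · Φ̄(u + v) / Φ̄(u) ≤ Φ̄(w + v)`, that is, `g_α(u + v) ≥ w + v`.
-/

open Filter Topology

lemma phi_pos (x : ℝ) : 0 < phi x := by
  unfold phi
  positivity

lemma continuous_phi : Continuous phi := by
  unfold phi
  fun_prop

lemma phi_neg (x : ℝ) : phi (-x) = phi x := by
  simp only [phi, neg_sq]

lemma phi_eq_mul_exp_neg_mul_sq (x : ℝ) :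
    phi x = (Real.sqrt (2 * π))⁻¹ * Real.exp (-(1 / 2) * x ^ 2) := by
  unfold phi
  ring_nf

lemma integrable_phi : Integrable phi := by
  simp only [funext phi_eq_mul_exp_neg_mul_sq]
  exact (integrable_exp_neg_mul_sq (by norm_num)).const_mul _

lemma integrable_mul_phi : Integrable fun x => x * phi x := by
  refine ((integrable_mul_exp_neg_mul_sq (b := 1 / 2) (by norm_num)).const_mul
    (Real.sqrt (2 * π))⁻¹).congr (Eventually.of_forall fun x => ?_)
  simp only [phi_eq_mul_exp_neg_mul_sq]
  ring

lemma integral_phi : ∫ x, phi x = 1 := by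
  simp only [phi_eq_mul_exp_neg_mul_sq, integral_const_mul, integral_gaussian]
  rw [show π / (1 / 2) = 2 * π by ring, inv_mul_cancel₀ (by positivity)]

lemma tendsto_phi_atTop : Tendsto phi atTop (𝓝 0) := by
  simp only [funext phi_eq_mul_exp_neg_mul_sq]
  have h : Tendsto (fun x : ℝ => -(1 / 2) * x ^ 2) atTop atBot :=
    (tendsto_pow_atTop two_ne_zero).const_mul_atTop_of_neg (by norm_num)
  simpa using (tendsto_exp_atBot.comp h).const_mul (Real.sqrt (2 * π))⁻¹

lemma hasDerivAt_phi (x : ℝ) : HasDerivAt phi (-x * phi x) x := by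
  have h : HasDerivAt (fun x : ℝ => -x ^ 2 / 2) (-x) x := by
    exact ((hasDerivAt_pow 2 x).neg.div_const 2).congr_deriv (by ring)
  exact (h.exp.const_mul (Real.sqrt (2 * π))⁻¹).congr_deriv (by unfold phi; ring)

lemma Phibar_eq_sub_intervalIntegral (x : ℝ) :
    Phibar x = Phibar 0 - ∫ t in (0 : ℝ)..x, phi t := by
  have h0 := intervalIntegral.integral_Iic_add_Ioi (b := 0)
    integrable_phi.integrableOn integrable_phi.integrableOn
  have hx := intervalIntegral.integral_Iic_add_Ioi (b := x)
    integrable_phi.integrableOn integrable_phi.integrableOn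
  have hsub := intervalIntegral.integral_Iic_sub_Iic (μ := volume) (a := 0) (b := x)
    integrable_phi.integrableOn integrable_phi.integrableOn
  unfold Phibar
  linarith

lemma Phibar_neg (x : ℝ) : Phibar (-x) = 1 - Phibar x := by
  have hsplit := intervalIntegral.integral_Iic_add_Ioi (b := x)
    integrable_phi.integrableOn integrable_phi.integrableOn
  rw [integral_phi] at hsplit
  have hrefl : Phibar (-x) = ∫ t in Iic x, phi t := by
    simp only [Phibar, ← integral_comp_neg_Iic, phi_neg]
  rw [hrefl, Phibar]
  linarith

lemma hasDerivAt_Phibar (x : ℝ) : HasDerivAt Phibar (-phi x) x := by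
  have hFTC : HasDerivAt (fun y => ∫ t in (0 : ℝ)..y, phi t) (phi x) x :=
    intervalIntegral.integral_hasDerivAt_right integrable_phi.intervalIntegrable
      continuous_phi.stronglyMeasurable.stronglyMeasurableAtFilter continuous_phi.continuousAt
  simpa only [← Phibar_eq_sub_intervalIntegral] using hFTC.const_sub (Phibar 0)

lemma continuous_Phibar : Continuous Phibar :=
  continuous_iff_continuousAt.2 fun x => (hasDerivAt_Phibar x).continuousAt

lemma Phibar_strictAnti : StrictAnti Phibar :=
  strictAnti_of_hasDerivAt_neg hasDerivAt_Phibar fun x => neg_neg_of_pos (phi_pos x)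

lemma Phibar_pos (x : ℝ) : 0 < Phibar x := by
  have hsupp : Function.support phi = univ :=
    eq_univ_of_forall fun t => (phi_pos t).ne'
  rw [Phibar, setIntegral_pos_iff_support_of_nonneg_ae
    (Eventually.of_forall fun t => (phi_pos t).le) integrable_phi.integrableOn]
  simp [hsupp]

lemma tendsto_Phibar_atTop : Tendsto Phibar atTop (𝓝 0) := by
  have h : Tendsto (fun x => Phibar 0 - ∫ t in (0 : ℝ)..x, phi t) atTop
      (𝓝 (Phibar 0 - Phibar 0)) :=
    (intervalIntegral_tendsto_integral_Ioi 0 integrable_phi.integrableOn tendsto_id).const_sub _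
  simpa only [← Phibar_eq_sub_intervalIntegral, sub_self] using h

lemma tendsto_Phibar_atBot : Tendsto Phibar atBot (𝓝 1) := by
  have h := (tendsto_Phibar_atTop.comp tendsto_neg_atBot_atTop).const_sub 1
  simpa only [Function.comp_def, Phibar_neg, sub_sub_cancel, sub_zero] using h

lemma Ioo_subset_range_Phibar : Ioo 0 1 ⊆ range Phibar := by
  intro y ⟨hy0, hy1⟩
  obtain ⟨a, ha⟩ := (tendsto_Phibar_atTop.eventually (eventually_le_nhds hy0)).exists
  obtain ⟨b, hb⟩ := (tendsto_Phibar_atBot.eventually (eventually_ge_nhds hy1)).exists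
  exact intermediate_value_univ a b continuous_Phibar ⟨ha, hb⟩

lemma Phibar_PhibarInv {y : ℝ} (hy : y ∈ Ioo 0 1) : Phibar (PhibarInv y) = y :=
  Function.invFun_eq (Ioo_subset_range_Phibar hy)

lemma le_PhibarInv_iff {x y : ℝ} (hy : y ∈ Ioo 0 1) : x ≤ PhibarInv y ↔ y ≤ Phibar x := by
  rw [← Phibar_strictAnti.le_iff_ge, Phibar_PhibarInv hy]

lemma integral_Ioi_mul_phi (x : ℝ) : ∫ t in Ioi x, t * phi t = phi x := by
  have h := integral_Ioi_of_hasDerivAt_of_tendsto' (f := fun t => -phi t) (a := x)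
    (fun t _ => (hasDerivAt_phi t).neg.congr_deriv (by ring))
    integrable_mul_phi.integrableOn (by simpa using tendsto_phi_atTop.neg)
  rwa [zero_sub, neg_neg] at h

lemma mul_Phibar_le_phi (x : ℝ) : x * Phibar x ≤ phi x := by
  rcases le_or_gt x 0 with hx | hx
  · exact (mul_nonpos_of_nonpos_of_nonneg hx (Phibar_pos x).le).trans (phi_pos x).le
  · rw [Phibar, ← integral_const_mul, ← integral_Ioi_mul_phi x]
    exact setIntegral_mono_on (integrable_phi.integrableOn.const_mul x)
      integrable_mul_phi.integrableOn measurableSet_Ioi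
      fun t ht => mul_le_mul_of_nonneg_right (le_of_lt ht) (phi_pos t).le

lemma Phibar_div_phi_antitone : Antitone fun x => Phibar x / phi x := by
  have hderiv x : HasDerivAt (fun y => Phibar y / phi y)
      ((-phi x * phi x - Phibar x * (-x * phi x)) / phi x ^ 2) x :=
    (hasDerivAt_Phibar x).div (hasDerivAt_phi x) (phi_pos x).ne'
  refine antitone_of_hasDerivAt_nonpos hderiv fun x => ?_
  refine div_nonpos_of_nonpos_of_nonneg ?_ (sq_nonneg _)
  nlinarith [mul_Phibar_le_phi x, phi_pos x]

lemma Phibar_add_div_Phibar_antitone {v : ℝ} (hv : 0 ≤ v) :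
    Antitone fun x => Phibar (x + v) / Phibar x := by
  have hderiv x : HasDerivAt (fun y => Phibar (y + v) / Phibar y)
      ((-phi (x + v) * Phibar x - Phibar (x + v) * -phi x) / Phibar x ^ 2) x :=
    ((hasDerivAt_Phibar (x + v)).comp_add_const x v).div (hasDerivAt_Phibar x) (Phibar_pos x).ne'
  refine antitone_of_hasDerivAt_nonpos hderiv fun x => ?_
  refine div_nonpos_of_nonpos_of_nonneg ?_ (sq_nonneg _)
  have hmills := Phibar_div_phi_antitone (le_add_of_nonneg_right hv : x ≤ x + v)
  rw [div_le_div_iff₀ (phi_pos _) (phi_pos _)] at hmills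
  linarith

/-- For `α ∈ (0,1]`, all `u` with `Φ̄(u) ≤ α/2` and `v ≥ 0`, one has
`g_α(u + v) ≥ g_α(u) + v`. -/
theorem galpha_superadditive {α : ℝ} (hα : α ∈ Set.Ioc (0 : ℝ) 1) {u : ℝ}
    (hu : Phibar u ≤ α / 2) {v : ℝ} (hv : 0 ≤ v) :
    galpha α (u + v) ≥ galpha α u + v := by
  obtain ⟨hα0, hα1⟩ := hα
  have hmem {p : ℝ} (hp : 0 < p) (hpu : p ≤ Phibar u) : p / α ∈ Ioo 0 1 :=
    ⟨by positivity, (div_lt_one hα0).2 (by linarith)⟩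
  have hdecr : Phibar (u + v) ≤ Phibar u :=
    Phibar_strictAnti.antitone (le_add_of_nonneg_right hv)
  set w := galpha α u
  have hw : Phibar w = Phibar u / α := Phibar_PhibarInv (hmem (Phibar_pos u) le_rfl)
  have hwu : w ≤ u := by
    rw [← Phibar_strictAnti.le_iff_ge, hw]
    exact le_div_self (Phibar_pos u).le hα0 hα1
  have hratio := Phibar_add_div_Phibar_antitone hv hwu
  rw [galpha, ge_iff_le, le_PhibarInv_iff (hmem (Phibar_pos _) hdecr)]
  calc Phibar (u + v) / α = Phibar (u + v) / Phibar u * Phibar w := by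
        rw [hw]; field_simp [(Phibar_pos u).ne']
    _ ≤ Phibar (w + v) / Phibar w * Phibar w :=
        mul_le_mul_of_nonneg_right hratio (Phibar_pos w).le
    _ = Phibar (w + v) := div_mul_cancel₀ _ (Phibar_pos w).ne'
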